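/- For every integer i with L ≤ i ≤ α_t, the coefficient b_i(I) is a positive integer; and for every integer i with 0 ≤ i < L or i > α_t, b_i(I) = 0. -/

import Mathlib

open Finset

/-- Sequences of length `ℓ` (positions `1..ℓ`) with entries in `{1,…,n}`,
encoded as functions `ℕ → ℕ` vanishing outside `[1, ℓ]`. -/
def Seqs (ℓ n : ℕ) : Set (ℕ → ℕ) :=
  {v | (∀ i ∈ Finset.Icc 1 ℓ, v i ∈ Finset.Icc 1 n) ∧ ∀ i, i ∉ Finset.Icc 1 ℓ → v i = 0}

/-- Descent set of a sequence of length `ℓ`: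
`Des(v) = {i ∈ {1,…,ℓ-1} : v_i > v_{i+1}}`. -/
def Des (ℓ : ℕ) (v : ℕ → ℕ) : Set ℕ :=
  {i | 1 ≤ i ∧ i < ℓ ∧ v (i + 1) < v i}

/-- Number of occurrences of the value `j` among positions `1..ℓ` of `v`. -/
def mult (ℓ : ℕ) (v : ℕ → ℕ) (j : ℕ) : ℕ :=
  ((Finset.Icc 1 ℓ).filter fun i => v i = j).card

/-- `𝔡^m(I, n)`: the number of sequences of length `n*m`, in which each of `1,…,n`
appears exactly `m` times, whose descent set is `I`. -/
noncomputable def dP (m : ℕ) (I : Finset ℕ) (n : ℕ) : ℕ :=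
  Set.ncard {w ∈ Seqs (n * m) n |
    Des (n * m) w = ↑I ∧ ∀ j ∈ Finset.Icc 1 n, mult (n * m) w j = m}

/-- `N(I, n)`: the number of sequences `v = (v_1, …, v_{α_t})` with entries in `{1,…,n}`
such that `Des v = I \ {α_t}` and `v_{α_t} ≠ 1`. -/
noncomputable def Ncount (I : Finset ℕ) (n : ℕ) : ℕ :=
  Set.ncard {v ∈ Seqs (I.sup id) n |
    Des (I.sup id) v = ↑(I.erase (I.sup id)) ∧ v (I.sup id) ≠ 1}

/-- `D^m(I, n)`: the number of sequences `v = (v_1, …, v_{α_t})` with entries in `{1,…,n}`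
such that `Des v = I \ {α_t}` and each of `1,…,n` appears at most `m` times in `v`. -/
noncomputable def Dcount (m : ℕ) (I : Finset ℕ) (n : ℕ) : ℕ :=
  Set.ncard {v ∈ Seqs (I.sup id) n |
    Des (I.sup id) v = ↑(I.erase (I.sup id)) ∧ ∀ j ∈ Finset.Icc 1 n, mult (I.sup id) v j ≤ m}

/-- `b_i(I)`: the number of sequences `v = (v_1, …, v_{α_t})` with entries in `{1,…,i+1}`
such that `Des v = I \ {α_t}`, every number in `{2,…,i+1}` occurs in `v`, and `v_{α_t} ≠ 1`. -/
noncomputable def bcoef (I : Finset ℕ) (i : ℕ) : ℕ :=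
  Set.ncard {v ∈ Seqs (I.sup id) (i + 1) |
    Des (I.sup id) v = ↑(I.erase (I.sup id)) ∧
    (∀ l ∈ Finset.Icc 2 (i + 1), ∃ j ∈ Finset.Icc 1 (I.sup id), v j = l) ∧
    v (I.sup id) ≠ 1}

/-- `L(I)`: the length of the longest run of consecutive integers contained in `I`. -/
def longestRun (I : Finset ℕ) : ℕ :=
  I.sup fun a => ((Finset.Icc a (I.sup id)).filter fun b => Finset.Icc a b ⊆ I).card

/-- `alphaVal I k` is the `k`-th smallest element of `I` (`1`-indexed), with `alphaVal I 0 = 0`. -/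
def alphaVal (I : Finset ℕ) (k : ℕ) : ℕ :=
  if k = 0 then 0 else (I.sort (· ≤ ·)).getD (k - 1) 0

/-- For a composition `A = (a_1,…,a_s)` of `t = |I|`, `sigmaC I A i` is
`σ_{i+1} = β_{a_1+⋯+a_i+1} + ⋯ + β_{a_1+⋯+a_{i+1}}`, where `β` is the sequence of first
differences of `(0, α_1, …, α_t)`; by telescoping this equals
`α_{a_1+⋯+a_{i+1}} - α_{a_1+⋯+a_i}`. -/
def sigmaC (I : Finset ℕ) {t : ℕ} (A : Composition t) (i : ℕ) : ℕ :=
  alphaVal I (A.sizeUpTo (i + 1)) - alphaVal I (A.sizeUpTo i)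

/-- `C(A, I)` for a composition `A = (a_1,…,a_r)`: the number of sequences
`v = (v_1, …, v_{α_t})` with entries in `{1,…,r}` such that `Des v = I \ {α_t}`
and the number `j` appears exactly `a_j` times in `v`, for each `j ∈ {1,…,r}`. -/
noncomputable def Ccount (I : Finset ℕ) {N : ℕ} (A : Composition N) : ℕ :=
  Set.ncard {v ∈ Seqs (I.sup id) A.length |
    Des (I.sup id) v = ↑(I.erase (I.sup id)) ∧
    ∀ j ∈ Finset.Icc 1 A.length, mult (I.sup id) v j = A.blocks.getD (j - 1) 0}

/-- The generalized binomial coefficient `C(a, i) = a(a-1)⋯(a-i+1)/i!` for an integer `a`. -/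
def genChoose (a : ℤ) (i : ℕ) : ℚ :=
  (∏ j ∈ Finset.range i, ((a : ℚ) - (j : ℚ))) / (Nat.factorial i)

/-!
A run `a, a + 1, …, a + L - 1` in `I` forces `L - 1` consecutive descents ending in an entry
`≥ 2` (the last entry, or the top of one more descent), so some entry is at least `L + 1`;
and the values `2, …, i + 1` need `i ≤ α_t` positions. Conversely, `i = L` is realised by the
sequence that is `2` at `α_t`, `1` after each non-descent and one more than its successor at each
descent; and a sequence for `i < α_t` has a value `c` that is `1` or repeated (pigeonhole):
raising the last occurrence of `c` and every larger value by one keeps the descent set and adds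
the value `i + 2`.
-/

section

variable {I : Finset ℕ} {ℓ n c p q i : ℕ} {v : ℕ → ℕ}

lemma le_longestRun {a k : ℕ} (h : Ico a (a + k) ⊆ I) : k ≤ longestRun I := by
  rcases Nat.eq_zero_or_pos k with rfl | hk
  · exact Nat.zero_le _
  have ha : a ∈ I := h (by simp [hk])
  have hsub : Ico a (a + k) ⊆ {b ∈ Icc a (I.sup id) | Icc a b ⊆ I} := by
    intro b hb
    have hbI : b ∈ I := h hb
    rw [mem_Ico] at hb
    refine mem_filter.2 ⟨mem_Icc.2 ⟨hb.1, le_sup (f := id) hbI⟩, fun x hx => h ?_⟩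
    rw [mem_Icc] at hx
    exact mem_Ico.2 ⟨hx.1, by omega⟩
  calc k = #(Ico a (a + k)) := by simp
    _ ≤ _ := card_le_card hsub
    _ ≤ longestRun I := le_sup (f := fun a => #{b ∈ Icc a (I.sup id) | Icc a b ⊆ I}) ha

lemma exists_Ico_longestRun_subset (I : Finset ℕ) : ∃ a, Ico a (a + longestRun I) ⊆ I := by
  rcases I.eq_empty_or_nonempty with rfl | hI
  · exact ⟨0, by simp [longestRun]⟩
  obtain ⟨a, -, hL⟩ := exists_mem_eq_sup I hI fun a => #{b ∈ Icc a (I.sup id) | Icc a b ⊆ I}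
  refine ⟨a, fun b hb => ?_⟩
  rw [mem_Ico] at hb
  by_contra hbI
  -- no `b' ≥ b` ends a run starting at `a`, so that run is shorter than `b - a`
  have hsub : {b' ∈ Icc a (I.sup id) | Icc a b' ⊆ I} ⊆ Ico a b := by
    intro b' hb'
    rw [mem_filter, mem_Icc] at hb'
    exact mem_Ico.2 ⟨hb'.1.1, lt_of_not_ge fun hbb' => hbI (hb'.2 (mem_Icc.2 ⟨hb.1, hbb'⟩))⟩
  have := card_le_card hsub
  rw [Nat.card_Ico, ← hL] at this
  unfold longestRun at hb
  omega

lemma add_le_of_Ico_subset_Des {a k : ℕ} (h : Set.Ico a (a + k) ⊆ Des ℓ v) :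
    v (a + k) + k ≤ v a := by
  induction k with
  | zero => simp
  | succ k ih =>
    have hk : v (a + k + 1) < v (a + k) := (h ⟨by omega, by omega⟩).2.2
    have := ih ((Set.Ico_subset_Ico_right (by omega)).trans h)
    rw [← add_assoc, ← add_assoc]
    omega

lemma finite_Seqs (ℓ n : ℕ) : (Seqs ℓ n).Finite := by
  have hinj : Set.InjOn (fun v (p : Icc 1 ℓ) => v p) (Seqs ℓ n) := by
    intro u hu w hw huw
    funext p
    by_cases hp : p ∈ Icc 1 ℓ
    · exact congrFun huw ⟨p, hp⟩
    · rw [hu.2 p hp, hw.2 p hp]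
  refine Set.Finite.of_finite_image ((Set.Finite.pi (t := fun _ => ↑(Icc 1 n))
    fun _ => (Icc 1 n).finite_toSet).subset ?_) hinj
  rintro _ ⟨v, hv, rfl⟩ p -
  exact hv.1 p p.2

def Covers (ℓ n : ℕ) (v : ℕ → ℕ) : Prop :=
  ∀ l ∈ Icc 2 n, ∃ j ∈ Icc 1 ℓ, v j = l

lemma Covers.le (h : Covers ℓ (n + 1) v) : n ≤ ℓ := by
  have hsub : Icc 2 (n + 1) ⊆ (Icc 1 ℓ).image v := fun l hl => by
    obtain ⟨j, hj, rfl⟩ := h l hl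
    exact mem_image_of_mem v hj
  have := (card_le_card hsub).trans card_image_le
  simp only [Nat.card_Icc] at this
  omega

/-- The sequences counted by `Ncount I n`. -/
def descentSeqs (I : Finset ℕ) (n : ℕ) : Set (ℕ → ℕ) :=
  {v ∈ Seqs (I.sup id) n | Des (I.sup id) v = ↑(I.erase (I.sup id)) ∧ v (I.sup id) ≠ 1}

def bcoefSet (I : Finset ℕ) (i : ℕ) : Set (ℕ → ℕ) :=
  {v ∈ descentSeqs I (i + 1) | Covers (I.sup id) (i + 1) v}

lemma bcoef_eq_ncard (I : Finset ℕ) (i : ℕ) : bcoef I i = (bcoefSet I i).ncard := by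
  unfold bcoef bcoefSet descentSeqs
  congr 1
  ext v
  exact ⟨fun ⟨h₁, h₂, h₃, h₄⟩ => ⟨⟨h₁, h₂, h₄⟩, h₃⟩, fun ⟨⟨h₁, h₂, h₄⟩, h₃⟩ => ⟨h₁, h₂, h₃, h₄⟩⟩

lemma finite_bcoefSet (I : Finset ℕ) (i : ℕ) : (bcoefSet I i).Finite :=
  (finite_Seqs _ _).subset fun _ hv => hv.1.1

lemma two_le_of_mem_descentSeqs (hv : v ∈ descentSeqs I n) (hp : p ∈ I) (hp1 : 1 ≤ p) :
    2 ≤ v p := by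
  obtain ⟨⟨hrange, -⟩, hDes, hlast⟩ := hv
  have hpℓ : p ≤ I.sup id := le_sup (f := id) hp
  have one_le : ∀ q ∈ Icc 1 (I.sup id), 1 ≤ v q := fun q hq => (mem_Icc.1 (hrange q hq)).1
  rcases eq_or_ne p (I.sup id) with rfl | hne
  · have := one_le _ (mem_Icc.2 ⟨hp1, le_rfl⟩)
    omega
  · have hdes : p ∈ Des (I.sup id) v := by rw [hDes]; exact mem_erase.2 ⟨hne, hp⟩
    have := one_le (p + 1) (mem_Icc.2 ⟨by omega, hdes.2.1⟩)
    have := hdes.2.2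
    omega

lemma longestRun_lt_of_mem_descentSeqs (hIpos : ∀ x ∈ I, 1 ≤ x) (hL : 0 < longestRun I)
    (hv : v ∈ descentSeqs I n) : longestRun I < n := by
  obtain ⟨a, hrun⟩ := exists_Ico_longestRun_subset I
  set L := longestRun I
  have ha : a ∈ I := hrun (by simp [hL])
  have he : a + (L - 1) ∈ I := hrun (mem_Ico.2 ⟨by omega, by omega⟩)
  have heℓ : a + (L - 1) ≤ I.sup id := le_sup (f := id) he
  have hchain : Set.Ico a (a + (L - 1)) ⊆ Des (I.sup id) v := by
    rw [hv.2.1]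
    intro x hx
    exact mem_erase.2 ⟨by grind, hrun (mem_Ico.2 ⟨hx.1, by grind⟩)⟩
  have := add_le_of_Ico_subset_Des hchain
  have := two_le_of_mem_descentSeqs hv he (by grind)
  have := mem_Icc.1 (hv.1.1 a (mem_Icc.2 ⟨hIpos a ha, by omega⟩))
  omega

lemma bcoefSet_eq_empty_of_lt_longestRun (hIpos : ∀ x ∈ I, 1 ≤ x) (hi : i < longestRun I) :
    bcoefSet I i = ∅ :=
  Set.eq_empty_of_forall_notMem fun _ hv =>
    absurd (longestRun_lt_of_mem_descentSeqs hIpos (by omega) hv.1) (by omega)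

lemma bcoefSet_eq_empty_of_sup_lt (hi : I.sup id < i) : bcoefSet I i = ∅ :=
  Set.eq_empty_of_forall_notMem fun _ hv => absurd hv.2.le (by omega)

def bump (v : ℕ → ℕ) (c q p : ℕ) : ℕ :=
  if c < v p ∨ p = q then v p + 1 else v p

lemma Des_bump (hq : IsGreatest (v ⁻¹' {c}) q) : Des ℓ (bump v c q) = Des ℓ v := by
  ext p
  have : v p = c → p ≤ q := fun h => hq.2 h
  have : v (p + 1) = c → p + 1 ≤ q := fun h => hq.2 h
  have : p = q → v p = c := by rintro rfl; exact hq.1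
  have : p + 1 = q → v (p + 1) = c := by rintro rfl; exact hq.1
  simp only [Des, bump, Set.mem_ofPred_eq]
  split_ifs <;> omega

lemma bump_mem_Seqs (hv : v ∈ Seqs ℓ n) (hq : q ∈ Icc 1 ℓ) : bump v c q ∈ Seqs ℓ (n + 1) := by
  refine ⟨fun p hp => ?_, fun p hp => ?_⟩
  · have := mem_Icc.1 (hv.1 p hp)
    rw [mem_Icc]
    unfold bump
    split_ifs <;> omega
  · have hp0 := hv.2 p hp
    have : p ≠ q := by rintro rfl; exact hp hq
    simp [bump, hp0, this]

lemma Covers.bump (hcov : Covers ℓ n v) (hq : q ∈ Icc 1 ℓ) (hvq : v q = c) (hcn : c ∈ Icc 1 n)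
    (hc : c = 1 ∨ 1 < mult ℓ v c) : Covers ℓ (n + 1) (bump v c q) := by
  intro l hl
  rw [mem_Icc] at hl hcn
  rcases lt_trichotomy l c with hlc | rfl | hcl
  · obtain ⟨j, hj, hvj⟩ := hcov l (mem_Icc.2 ⟨hl.1, by omega⟩)
    refine ⟨j, hj, ?_⟩
    have : j ≠ q := by rintro rfl; omega
    simp [_root_.bump, hvj, this, hlc.not_gt]
  · obtain ⟨j, hj, hjq⟩ := exists_mem_ne (hc.resolve_left (by omega)) q
    rw [mem_filter] at hj
    exact ⟨j, hj.1, by simp [_root_.bump, hj.2, hjq]⟩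
  · rcases eq_or_lt_of_le (Nat.succ_le_of_lt hcl) with rfl | hcl'
    · exact ⟨q, hq, by simp [_root_.bump, hvq]⟩
    · obtain ⟨j, hj, hvj⟩ := hcov (l - 1) (mem_Icc.2 ⟨by omega, by omega⟩)
      refine ⟨j, hj, ?_⟩
      simp only [_root_.bump, hvj]
      rw [if_pos (Or.inl (by omega))]
      omega

lemma exists_isGreatest_fiber (hv : v ∈ Seqs ℓ n) (hc : 0 < mult ℓ v c) :
    ∃ q ∈ Icc 1 ℓ, IsGreatest (v ⁻¹' {c}) q := by
  have hne : ({p ∈ Icc 1 ℓ | v p = c} : Finset ℕ).Nonempty := card_pos.1 hc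
  obtain ⟨hqI, hq⟩ := mem_filter.1 (max'_mem _ hne)
  refine ⟨_, hqI, hq, fun p (hp : v p = c) => le_max' _ p (mem_filter.2 ⟨?_, hp⟩)⟩
  by_contra hpI
  obtain ⟨p₀, hp₀⟩ := hne
  have := mem_Icc.1 (hv.1 p₀ (mem_filter.1 hp₀).1)
  have := hv.2 p hpI
  have := (mem_filter.1 hp₀).2
  omega

lemma exists_one_or_repeated (hv : v ∈ Seqs ℓ (i + 1)) (hi : i < ℓ) :
    ∃ c ∈ Icc 1 (i + 1), 0 < mult ℓ v c ∧ (c = 1 ∨ 1 < mult ℓ v c) := by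
  by_cases h1 : 0 < mult ℓ v 1
  · exact ⟨1, by simp, h1, Or.inl rfl⟩
  -- otherwise the `ℓ > i` positions take only the `i` values `2, …, i + 1`
  have hmaps : ∀ p ∈ Icc 1 ℓ, v p ∈ Icc 2 (i + 1) := by
    intro p hp
    have := mem_Icc.1 (hv.1 p hp)
    have : v p ≠ 1 := fun h => h1 (card_pos.2 ⟨p, mem_filter.2 ⟨hp, h⟩⟩)
    exact mem_Icc.2 ⟨by omega, by omega⟩
  obtain ⟨c, hc, hmult⟩ := exists_lt_card_fiber_of_mul_lt_card_of_maps_to (n := 1) hmaps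
    (by simp only [Nat.card_Icc]; omega)
  exact ⟨c, Icc_subset_Icc_left one_le_two hc, by unfold mult; omega, Or.inr hmult⟩

lemma bcoefSet_succ_nonempty (hi : i < I.sup id) (h : (bcoefSet I i).Nonempty) :
    (bcoefSet I (i + 1)).Nonempty := by
  obtain ⟨v, ⟨hvSeq, hDes, hlast⟩, hcov⟩ := h
  obtain ⟨c, hcn, hc0, hc⟩ := exists_one_or_repeated hvSeq hi
  obtain ⟨q, hq, hgreatest⟩ := exists_isGreatest_fiber hvSeq hc0
  have hvℓ := mem_Icc.1 (hvSeq.1 (I.sup id) (mem_Icc.2 ⟨by omega, le_rfl⟩))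
  refine ⟨bump v c q, ⟨bump_mem_Seqs hvSeq hq, (Des_bump hgreatest).trans hDes, ?_⟩,
    hcov.bump hq hgreatest.1 hcn hc⟩
  unfold bump
  split_ifs <;> omega

/-- Along a longest run of `I` this sequence takes each of the values `L + 1, L, …, 2`. -/
def baseSeq (I : Finset ℕ) (p : ℕ) : ℕ :=
  if p = 0 ∨ I.sup id < p then 0
  else if p = I.sup id then 2
  else if p ∈ I then baseSeq I (p + 1) + 1 else 1
termination_by I.sup id + 1 - p

lemma baseSeq_of_lt (hp : 1 ≤ p) (hpℓ : p < I.sup id) :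
    baseSeq I p = if p ∈ I then baseSeq I (p + 1) + 1 else 1 := by
  rw [baseSeq, if_neg (by omega), if_neg (by omega)]

lemma one_le_baseSeq (hp : p ∈ Icc 1 (I.sup id)) : 1 ≤ baseSeq I p := by
  rw [mem_Icc] at hp
  rw [baseSeq]
  split_ifs <;> omega

lemma Ico_baseSeq_subset (hp : p ∈ Icc 1 (I.sup id)) :
    Ico p (p + baseSeq I p - 1) ⊆ I := by
  induction p using baseSeq.induct I with
  | case1 p hout => simp only [mem_Icc] at hp; omega
  | case2 hℓ =>
    have hI : I.Nonempty := nonempty_iff_ne_empty.2 fun h => by simp [h] at hℓ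
    have hℓI : I.sup id ∈ I := by simpa using sup_mem_of_nonempty (f := id) hI
    rw [baseSeq, if_neg hℓ, if_pos rfl, show I.sup id + 2 - 1 = I.sup id + 1 by omega,
      Ico_add_one_right_eq_Icc, Icc_self]
    exact singleton_subset_iff.2 hℓI
  | case3 p hin hpℓ hpI ih =>
    have hp' : p + 1 ∈ Icc 1 (I.sup id) := by
      have := le_sup (f := id) hpI
      simp only [mem_Icc, id] at this ⊢
      omega
    have h1 := one_le_baseSeq hp'
    rw [baseSeq, if_neg hin, if_neg hpℓ, if_pos hpI]
    intro x hx
    rw [mem_Ico] at hx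
    rcases eq_or_lt_of_le hx.1 with rfl | hlt
    · exact hpI
    · exact ih hp' (mem_Ico.2 ⟨hlt, by omega⟩)
  | case4 p hin hpℓ hpI =>
    rw [baseSeq, if_neg hin, if_neg hpℓ, if_neg hpI]
    simp

lemma baseSeq_le_longestRun_add_one (hp : p ∈ Icc 1 (I.sup id)) :
    baseSeq I p ≤ longestRun I + 1 := by
  have := le_longestRun (Nat.add_sub_assoc (one_le_baseSeq hp) p ▸ Ico_baseSeq_subset hp)
  omega

lemma baseSeq_mem_Seqs (I : Finset ℕ) : baseSeq I ∈ Seqs (I.sup id) (longestRun I + 1) := by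
  refine ⟨fun p hp => mem_Icc.2 ⟨one_le_baseSeq hp, baseSeq_le_longestRun_add_one hp⟩,
    fun p hp => ?_⟩
  rw [mem_Icc] at hp
  rw [baseSeq, if_pos (by omega)]

lemma Des_baseSeq (hIpos : ∀ x ∈ I, 1 ≤ x) :
    Des (I.sup id) (baseSeq I) = ↑(I.erase (I.sup id)) := by
  ext p
  simp only [Des, Set.mem_ofPred_eq, coe_erase, Set.mem_sdiff, mem_coe, Set.mem_singleton_iff]
  constructor
  · rintro ⟨hp1, hpℓ, hdes⟩
    have := one_le_baseSeq (I := I) (p := p + 1) (mem_Icc.2 ⟨by omega, hpℓ⟩)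
    rw [baseSeq_of_lt hp1 hpℓ] at hdes
    split_ifs at hdes with hpI
    · exact ⟨hpI, hpℓ.ne⟩
    · omega
  · rintro ⟨hpI, hpℓ⟩
    have hpℓ' : p < I.sup id := lt_of_le_of_ne (le_sup (f := id) hpI) hpℓ
    refine ⟨hIpos p hpI, hpℓ', ?_⟩
    rw [baseSeq_of_lt (hIpos p hpI) hpℓ', if_pos hpI]
    omega

lemma baseSeq_sup_ne_one (I : Finset ℕ) : baseSeq I (I.sup id) ≠ 1 := by
  rw [baseSeq]
  split_ifs <;> omega

lemma baseSeq_mem_descentSeqs (hIpos : ∀ x ∈ I, 1 ≤ x) :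
    baseSeq I ∈ descentSeqs I (longestRun I + 1) :=
  ⟨baseSeq_mem_Seqs I, Des_baseSeq hIpos, baseSeq_sup_ne_one I⟩

lemma baseSeq_eq_add {k : ℕ} (hp : 1 ≤ p) (hk : p + k ≤ I.sup id)
    (h : Ico p (p + k) ⊆ I) : baseSeq I p = baseSeq I (p + k) + k := by
  induction k generalizing p with
  | zero => rfl
  | succ k ih =>
    have hpI : p ∈ I := h (by simp)
    have hsub : Ico (p + 1) (p + 1 + k) ⊆ I := fun x hx => h (by grind)
    rw [baseSeq_of_lt hp (by omega), if_pos hpI, ih (by omega) (by omega) hsub,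
      show p + 1 + k = p + (k + 1) by omega, add_assoc]

lemma covers_baseSeq (hIpos : ∀ x ∈ I, 1 ≤ x) :
    Covers (I.sup id) (longestRun I + 1) (baseSeq I) := by
  intro l hl
  rw [mem_Icc] at hl
  obtain ⟨a, hrun⟩ := exists_Ico_longestRun_subset I
  set L := longestRun I
  have ha1 : 1 ≤ a := hIpos a (hrun (by simp; omega))
  have he : a + (L - 1) ∈ I := hrun (mem_Ico.2 ⟨by omega, by omega⟩)
  have heℓ : a + (L - 1) ≤ I.sup id := le_sup (f := id) he
  have hsub : ∀ k ≤ L - 1, Ico a (a + k) ⊆ I :=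
    fun k hk => (Ico_subset_Ico_right (by omega)).trans hrun
  -- the values along the run drop by one from at most `L + 1` down to at least `2`
  have h2 := two_le_of_mem_descentSeqs (baseSeq_mem_descentSeqs hIpos) he (by omega)
  have htop := baseSeq_eq_add ha1 heℓ (hsub _ le_rfl)
  have hmax := baseSeq_le_longestRun_add_one (I := I) (mem_Icc.2 ⟨ha1, by omega⟩)
  refine ⟨a + (L + 1 - l), mem_Icc.2 ⟨by omega, by omega⟩, ?_⟩
  have := baseSeq_eq_add ha1 (by omega) (hsub (L + 1 - l) (by omega))
  omega

lemma baseSeq_mem_bcoefSet (hIpos : ∀ x ∈ I, 1 ≤ x) :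
    baseSeq I ∈ bcoefSet I (longestRun I) :=
  ⟨baseSeq_mem_descentSeqs hIpos, covers_baseSeq hIpos⟩

lemma bcoefSet_nonempty (hIpos : ∀ x ∈ I, 1 ≤ x) (hL : longestRun I ≤ i) (hi : i ≤ I.sup id) :
    (bcoefSet I i).Nonempty := by
  induction i, hL using Nat.le_induction with
  | base => exact ⟨baseSeq I, baseSeq_mem_bcoefSet hIpos⟩
  | succ i _ ih => exact bcoefSet_succ_nonempty hi (ih (by omega))

end

theorem stmt_12_general (I : Finset ℕ) (hIpos : ∀ x ∈ I, 1 ≤ x) (i : ℕ) :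
    (longestRun I ≤ i ∧ i ≤ I.sup id → 0 < bcoef I i) ∧
    (i < longestRun I ∨ I.sup id < i → bcoef I i = 0) := by
  rw [bcoef_eq_ncard]
  refine ⟨fun ⟨hL, hi⟩ => ?_, fun h => ?_⟩
  · exact (Set.ncard_pos (finite_bcoefSet I i)).2 (bcoefSet_nonempty hIpos hL hi)
  · obtain h | h := h
    · rw [bcoefSet_eq_empty_of_lt_longestRun hIpos h, Set.ncard_empty]
    · rw [bcoefSet_eq_empty_of_sup_lt h, Set.ncard_empty]

/-- `b_i(I) > 0` for `L ≤ i ≤ α_t`, and `b_i(I) = 0` for `i < L` or `i > α_t`. -/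
theorem stmt_12 (I : Finset ℕ) (hI : I.Nonempty) (hIpos : ∀ x ∈ I, 1 ≤ x) (i : ℕ) :
    (longestRun I ≤ i ∧ i ≤ I.sup id → 0 < bcoef I i) ∧
    (i < longestRun I ∨ I.sup id < i → bcoef I i = 0) :=
  stmt_12_general I hIpos i
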